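/- (Corollary 2) Let d ≥ 1 and s₁, s₂ ∈ ℝ. Suppose the tensor Θ: ℤ^d × ℤ^d × ℤ^d → ℂ satisfies ‖Θ‖_{0,N} = sup_{j,k,ℓ∈ℤ^d} |Θ(j,k,ℓ)| ⟨|j−k|+|j−ℓ|⟩^{2N} < ∞ for some N > d + (1/2)(|s₁| + |s₂|). Then 𝒯_Θ is a bounded bilinear operator from ℓ^p_{s₁}(ℤ^d) × ℓ^q_{s₂}(ℤ^d) to ℓ^r_{s₁+s₂}(ℤ^d) for any 1 ≤ p, q, r ≤ ∞ with 1/p + 1/q = 1/r; in particular, if Θ satisfies this condition for some N > d, then 𝒯_Θ is bounded from ℓ^p(ℤ^d) × ℓ^q(ℤ^d) to ℓ^r(ℤ^d). -/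

import Mathlib

/-!
Peetre's inequality `⟨j⟩^s ≤ 2^{|s|/2} ⟨j - k⟩^{|s|} ⟨k⟩^s` moves the weight `⟨j⟩^{s₁+s₂}` onto
the inputs at the price of `|s₁| + |s₂|` powers of the off-diagonal decay of `Θ`, leaving
`⟨j⟩^{s₁+s₂} |Θ(j,k,ℓ)| ≲ K(j - k) ⟨k⟩^{s₁} · K(j - ℓ) ⟨ℓ⟩^{s₂}` with `K(m) = ⟨m⟩^{-u}` and
`u = N - (|s₁| + |s₂|)/2 > d`. So the weighted output is dominated pointwise by the product of the
convolutions `K * (⟨·⟩^{s₁} |f|)` and `K * (⟨·⟩^{s₂} |g|)`. Hölder's inequality splits its `ℓ^r`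
norm into an `ℓ^p` and an `ℓ^q` norm, and Young's inequality bounds these by `‖K‖_{ℓ¹}` times the
weighted norms of `f` and `g`; `K` is summable on `ℤ^d` because `u > d`.
-/

open scoped ENNReal NNReal BigOperators

noncomputable section

/-- The integer lattice `ℤ^d`. -/
abbrev Zd (d : ℕ) := Fin d → ℤ

/-- Euclidean norm `|j|` of an integer vector `j ∈ ℤ^d`. -/
def znorm {d : ℕ} (j : Zd d) : ℝ := Real.sqrt (∑ i, ((j i : ℝ)) ^ 2)

/-- Euclidean norm of a real vector. -/
def rnorm {d : ℕ} (x : Fin d → ℝ) : ℝ := Real.sqrt (∑ i, (x i) ^ 2)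

/-- Japanese bracket `⟨x⟩ = (1 + x²)^{1/2}`. -/
def jb (x : ℝ) : ℝ := Real.sqrt (1 + x ^ 2)

/-- The discrete bilinear operator `𝒯_Θ` (named `Tbil` here) associated with an infinite tensor `Θ`:
`(𝒯_Θ(f,g))_j = Σ_k Σ_ℓ Θ(j,k,ℓ) f_k g_ℓ`. -/
def Tbil {d : ℕ} (Θ : Zd d → Zd d → Zd d → ℂ) (f g : Zd d → ℂ) : Zd d → ℂ :=
  fun j => ∑' k, ∑' l, Θ j k l * f k * g l

/-- `ℓ^p`-type norm (extended-real valued) of a family of nonnegative extended reals,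
with the usual modification (supremum) when `p = ∞`. -/
def nestNorm {ι : Type*} (p : ℝ≥0∞) (F : ι → ℝ≥0∞) : ℝ≥0∞ :=
  if p = ∞ then ⨆ i, F i else (∑' i, F i ^ p.toReal) ^ (1 / p.toReal)

/-- The weighted `ℓ^p_s(ℤ^d)` norm `(Σ_k ⟨k⟩^{sp} |f_k|^p)^{1/p}`. -/
def wlpNorm {d : ℕ} (p : ℝ≥0∞) (s : ℝ) (f : Zd d → ℂ) : ℝ≥0∞ :=
  nestNorm p fun k => ENNReal.ofReal (jb (znorm k) ^ s * ‖f k‖)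

/-- The `ℓ^p(ℤ^d)` norm. -/
def lpNorm {d : ℕ} (p : ℝ≥0∞) (f : Zd d → ℂ) : ℝ≥0∞ :=
  nestNorm p fun k => ENNReal.ofReal ‖f k‖

/-- The tensor norm `‖Θ‖_{ω,N} = sup_{j,k,ℓ} |Θ(j,k,ℓ)| ⟨|j−k|+|j−ℓ|⟩^{2N} /
(⟨|j|+|k|⟩^ω ⟨|j|+|ℓ|⟩^ω)`. -/
def tensorNorm {d : ℕ} (ω N : ℝ) (Θ : Zd d → Zd d → Zd d → ℂ) : ℝ≥0∞ :=
  ⨆ j, ⨆ k, ⨆ l, ENNReal.ofReal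
    (‖Θ j k l‖ * jb (znorm (j - k) + znorm (j - l)) ^ (2 * N) /
      (jb (znorm j + znorm k) ^ ω * jb (znorm j + znorm l) ^ ω))

/-- The tensor norm `‖Θ‖_{ω₁,ω₂,N}`. -/
def tensorNorm2 {d : ℕ} (ω₁ ω₂ N : ℝ) (Θ : Zd d → Zd d → Zd d → ℂ) : ℝ≥0∞ :=
  ⨆ j, ⨆ k, ⨆ l, ENNReal.ofReal
    (‖Θ j k l‖ * jb (znorm (j - k) + znorm (j - l)) ^ (2 * N) /
      (jb (znorm j + znorm k) ^ ω₁ * jb (znorm j + znorm l) ^ ω₂))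

/-- The tensor norm `‖Θ‖_{0,0,ω,N} = sup_{j,k,ℓ} |Θ(j,k,ℓ)| ⟨|j−k|+|j−ℓ|⟩^{2N} /
⟨|j|+|k|+|ℓ|⟩^ω`. -/
def tensorNorm00 {d : ℕ} (ω N : ℝ) (Θ : Zd d → Zd d → Zd d → ℂ) : ℝ≥0∞ :=
  ⨆ j, ⨆ k, ⨆ l, ENNReal.ofReal
    (‖Θ j k l‖ * jb (znorm (j - k) + znorm (j - l)) ^ (2 * N) /
      jb (znorm j + znorm k + znorm l) ^ ω)

/-- The first bilinear commutator `[𝒯_Θ, b]₁(f,g) = 𝒯_Θ(bf, g) − b·𝒯_Θ(f,g)`. -/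
def comm1 {d : ℕ} (Θ : Zd d → Zd d → Zd d → ℂ) (b f g : Zd d → ℂ) : Zd d → ℂ :=
  fun j => Tbil Θ (fun k => b k * f k) g j - b j * Tbil Θ f g j

/-- The second bilinear commutator `[𝒯_Θ, b]₂(f,g) = 𝒯_Θ(f, bg) − b·𝒯_Θ(f,g)`. -/
def comm2 {d : ℕ} (Θ : Zd d → Zd d → Zd d → ℂ) (b f g : Zd d → ℂ) : Zd d → ℂ :=
  fun j => Tbil Θ f (fun l => b l * g l) j - b j * Tbil Θ f g j

/-- One-step finite difference in the variables `(j,k)`, with shift `v ∈ ℤ^d`: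
`(D2 v Θ)(j,k,ℓ) = Θ(j+v, k+v, ℓ) − Θ(j,k,ℓ)`. -/
def D2 {d : ℕ} (v : Zd d) (Θ : Zd d → Zd d → Zd d → ℂ) : Zd d → Zd d → Zd d → ℂ :=
  fun j k l => Θ (j + v) (k + v) l - Θ j k l

/-- One-step finite difference in the variables `(j,ℓ)`, with shift `v ∈ ℤ^d`:
`(D3 v Θ)(j,k,ℓ) = Θ(j+v, k, ℓ+v) − Θ(j,k,ℓ)`. -/
def D3 {d : ℕ} (v : Zd d) (Θ : Zd d → Zd d → Zd d → ℂ) : Zd d → Zd d → Zd d → ℂ :=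
  fun j k l => Θ (j + v) k (l + v) - Θ j k l

/-- The iterated partial finite difference operator `Δ₂^α` for `α ∈ ℤ^d`:
in direction `m`, `Δ_{2,m}^t = (Δ₂^{m, sign t})^{|t|}`. -/
def Delta2 {d : ℕ} (α : Zd d) (Θ : Zd d → Zd d → Zd d → ℂ) : Zd d → Zd d → Zd d → ℂ :=
  (List.finRange d).foldr
    (fun m F => (D2 (Pi.single m (Int.sign (α m))))^[(α m).natAbs] ∘ F) id Θ

/-- The iterated partial finite difference operator `Δ₃^β` for `β ∈ ℤ^d`. -/
def Delta3 {d : ℕ} (β : Zd d) (Θ : Zd d → Zd d → Zd d → ℂ) : Zd d → Zd d → Zd d → ℂ :=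
  (List.finRange d).foldr
    (fun m F => (D3 (Pi.single m (Int.sign (β m))))^[(β m).natAbs] ∘ F) id Θ

/-- `|α| = Σ_m |α_m|` for `α ∈ ℤ^d`. -/
def l1norm {d : ℕ} (α : Zd d) : ℝ := ∑ m, |(α m : ℝ)|

/-- The bilinear tensor class `BT^{ω,N}(ℤ^d)`:
`|Δ₂^α Δ₃^β Θ(j,k,ℓ)| ≤ C_{N,α,β} ⟨|j|+|k|+|ℓ|⟩^{ω−|α|−|β|} ⟨|j−k|+|j−ℓ|⟩^{−2N}`. -/
def BT {d : ℕ} (ω : ℝ) (N : ℕ) (Θ : Zd d → Zd d → Zd d → ℂ) : Prop :=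
  ∀ α β : Zd d, ∃ C : ℝ, 0 < C ∧ ∀ j k l : Zd d,
    ‖Delta2 α (Delta3 β Θ) j k l‖ ≤
      C * jb (znorm j + znorm k + znorm l) ^ (ω - l1norm α - l1norm β) *
        jb (znorm (j - k) + znorm (j - l)) ^ (-(2 * (N : ℝ)))

/-- The bilinear tensor class of order zero, `BT^0(ℤ^d) = ∪_{N > d} BT^{0,N}(ℤ^d)`. -/
def BT0 {d : ℕ} (Θ : Zd d → Zd d → Zd d → ℂ) : Prop :=
  ∃ N : ℕ, d < N ∧ BT 0 N Θ

/-- Directional derivative of a function on `ℝ^d × ℝ^d` in the direction `v`. -/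
def pDeriv {d : ℕ} (v : (Fin d → ℝ) × (Fin d → ℝ))
    (F : (Fin d → ℝ) × (Fin d → ℝ) → ℂ) : (Fin d → ℝ) × (Fin d → ℝ) → ℂ :=
  fun p => fderiv ℝ F p v

/-- Iterated partial derivative `∂_x^α` in the first group of variables. -/
def pdx {d : ℕ} (α : Fin d → ℕ) :
    ((Fin d → ℝ) × (Fin d → ℝ) → ℂ) → (Fin d → ℝ) × (Fin d → ℝ) → ℂ :=
  (List.finRange d).foldr (fun m G => (pDeriv (Pi.single m 1, 0))^[α m] ∘ G) id

/-- Iterated partial derivative `∂_y^β` in the second group of variables. -/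
def pdy {d : ℕ} (β : Fin d → ℕ) :
    ((Fin d → ℝ) × (Fin d → ℝ) → ℂ) → (Fin d → ℝ) × (Fin d → ℝ) → ℂ :=
  (List.finRange d).foldr (fun m G => (pDeriv (0, Pi.single m 1))^[β m] ∘ G) id

open Real

theorem jb_pos (x : ℝ) : 0 < jb x := sqrt_pos.2 (by positivity)

theorem jb_rpow_pos (x s : ℝ) : 0 < jb x ^ s := rpow_pos_of_pos (jb_pos x) s

theorem abs_le_jb (x : ℝ) : |x| ≤ jb x := abs_le_sqrt (by linarith)

theorem jb_le_jb {x y : ℝ} (hx : 0 ≤ x) (hxy : x ≤ y) : jb x ≤ jb y := by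
  unfold jb; gcongr

theorem jb_add_le (x y : ℝ) : jb (x + y) ≤ √2 * (jb x * jb y) := by
  rw [jb, jb, jb, ← sqrt_mul (by positivity), ← sqrt_mul (by positivity)]
  exact sqrt_le_sqrt (by nlinarith [sq_nonneg (x - y), sq_nonneg (x * y)])

/-- Peetre's inequality. -/
theorem jb_rpow_le_of_abs_sub_le {x y z : ℝ} (hx : 0 ≤ x) (hy : 0 ≤ y) (hxy : |x - y| ≤ z)
    (s : ℝ) : jb x ^ s ≤ (√2 * jb z) ^ |s| * jb y ^ s := by
  obtain ⟨hxy₁, hxy₂⟩ := abs_sub_le_iff.1 hxy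
  have hc : 0 < √2 * jb z := mul_pos (by positivity) (jb_pos z)
  rcases le_or_gt 0 s with hs | hs
  · have : jb x ≤ √2 * jb z * jb y := by
      calc jb x ≤ jb (y + z) := jb_le_jb hx (by linarith)
        _ ≤ √2 * jb z * jb y := by linarith [jb_add_le y z, mul_comm (jb y) (jb z)]
    rw [abs_of_nonneg hs, ← mul_rpow hc.le (jb_pos y).le]
    exact rpow_le_rpow (jb_pos x).le this hs
  · have : jb y ≤ √2 * jb z * jb x := by
      calc jb y ≤ jb (x + z) := jb_le_jb hy (by linarith)
        _ ≤ √2 * jb z * jb x := by linarith [jb_add_le x z, mul_comm (jb x) (jb z)]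
    rw [abs_of_neg hs, rpow_neg hc.le, ← div_eq_inv_mul, le_div_iff₀ (rpow_pos_of_pos hc _),
      ← mul_rpow (jb_pos x).le hc.le]
    exact rpow_le_rpow_of_nonpos (jb_pos y) (by linarith) hs.le

theorem jb_rpow_mul_jb_rpow_neg_le {x y z : ℝ} (hx : 0 ≤ x) (hy : 0 ≤ y) (hxy : |x - y| ≤ z)
    (s u : ℝ) : jb x ^ s * jb z ^ (-(u + |s|)) ≤ √2 ^ |s| * (jb z ^ (-u) * jb y ^ s) := by
  have hz := jb_pos z
  calc jb x ^ s * jb z ^ (-(u + |s|))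
      ≤ (√2 * jb z) ^ |s| * jb y ^ s * jb z ^ (-(u + |s|)) := by
        gcongr; exact jb_rpow_le_of_abs_sub_le hx hy hxy s
    _ = √2 ^ |s| * ((jb z ^ |s| * jb z ^ (-(u + |s|))) * jb y ^ s) := by
        rw [mul_rpow (by positivity) hz.le]; ring
    _ = √2 ^ |s| * (jb z ^ (-u) * jb y ^ s) := by
        rw [← rpow_add hz]; ring_nf

theorem jb_add_rpow_neg_le {a b N₁ N₂ : ℝ} (ha : 0 ≤ a) (hb : 0 ≤ b) (h₁ : 0 ≤ N₁) (h₂ : 0 ≤ N₂) :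
    jb (a + b) ^ (-(N₁ + N₂)) ≤ jb a ^ (-N₁) * jb b ^ (-N₂) := by
  have hab := jb_pos (a + b)
  rw [neg_add, rpow_add hab]
  exact mul_le_mul
    (rpow_le_rpow_of_nonpos (jb_pos a) (jb_le_jb ha (by linarith)) (by linarith))
    (rpow_le_rpow_of_nonpos (jb_pos b) (jb_le_jb hb (by linarith)) (by linarith))
    (jb_rpow_pos _ _).le (jb_rpow_pos _ _).le

theorem znorm_eq_norm {d : ℕ} (j : Zd d) : znorm j = ‖WithLp.toLp 2 (fun i => (j i : ℝ))‖ := by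
  simp [znorm, EuclideanSpace.norm_eq]

theorem znorm_nonneg {d : ℕ} (j : Zd d) : 0 ≤ znorm j := sqrt_nonneg _

theorem abs_znorm_sub_znorm_le {d : ℕ} (j k : Zd d) : |znorm j - znorm k| ≤ znorm (j - k) := by
  have : (fun i => ((j - k) i : ℝ)) = (fun i => (j i : ℝ)) - fun i => (k i : ℝ) := by
    ext i; simp
  rw [znorm_eq_norm, znorm_eq_norm, znorm_eq_norm, this, WithLp.toLp_sub]
  exact abs_norm_sub_norm_le _ _

theorem abs_le_znorm {d : ℕ} (m : Zd d) (i : Fin d) : |(m i : ℝ)| ≤ znorm m := by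
  rw [← sqrt_sq_eq_abs]
  exact sqrt_le_sqrt (Finset.single_le_sum (f := fun i => (m i : ℝ) ^ 2)
    (fun _ _ => sq_nonneg _) (Finset.mem_univ i))

theorem tsum_ofReal_jb_rpow_neg_ne_top {u : ℝ} (hu : 1 < u) :
    ∑' n : ℤ, ENNReal.ofReal (jb |(n : ℝ)| ^ (-u)) ≠ ∞ := by
  refine Summable.tsum_ofReal_ne_top
    ((summable_abs_int_rpow hu).of_norm_bounded_eventually ?_)
  filter_upwards [Filter.eventually_cofinite_ne 0] with n hn
  have hpos : 0 < |(n : ℝ)| := abs_pos.2 (Int.cast_ne_zero.2 hn)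
  rw [norm_of_nonneg (jb_rpow_pos _ _).le]
  exact rpow_le_rpow_of_nonpos hpos ((abs_abs _).symm.trans_le (abs_le_jb _)) (by linarith)

theorem tsum_fin_pi_prod {α : Type*} (a : α → ℝ≥0∞) (n : ℕ) :
    ∑' m : Fin n → α, ∏ i, a (m i) = (∑' x, a x) ^ n := by
  induction n with
  | zero => simp
  | succ n ih =>
    rw [← (Fin.consEquiv fun _ => α).tsum_eq, ENNReal.tsum_prod', pow_succ', ← ih,
      ← ENNReal.tsum_mul_right]
    refine tsum_congr fun x => ?_
    rw [← ENNReal.tsum_mul_left]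
    refine tsum_congr fun m => ?_
    simp [Fin.consEquiv, Fin.prod_univ_succ]

theorem jb_znorm_rpow_neg_le_prod {d : ℕ} (hd : 0 < d) {t : ℝ} (ht : 0 ≤ t) (m : Zd d) :
    jb (znorm m) ^ (-t) ≤ ∏ i, jb |(m i : ℝ)| ^ (-(t / d)) := by
  have hd' : (0 : ℝ) < d := Nat.cast_pos.2 hd
  calc jb (znorm m) ^ (-t) = ∏ _i : Fin d, jb (znorm m) ^ (-(t / d)) := by
        rw [Finset.prod_const, Finset.card_univ, Fintype.card_fin, ← rpow_natCast,
          ← rpow_mul (jb_pos _).le]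
        congr 1; field_simp
    _ ≤ ∏ i, jb |(m i : ℝ)| ^ (-(t / d)) := by
        refine Finset.prod_le_prod (fun i _ => (jb_rpow_pos _ _).le) fun i _ => ?_
        exact rpow_le_rpow_of_nonpos (jb_pos _) (jb_le_jb (abs_nonneg _) (abs_le_znorm m i))
          (by rw [neg_nonpos]; positivity)

theorem tsum_ofReal_jb_znorm_rpow_neg_ne_top {d : ℕ} {t : ℝ} (ht : d < t) :
    ∑' m : Zd d, ENNReal.ofReal (jb (znorm m) ^ (-t)) ≠ ∞ := by
  rcases Nat.eq_zero_or_pos d with rfl | hd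
  · simp
  have hd' : (0 : ℝ) < d := Nat.cast_pos.2 hd
  refine ne_top_of_le_ne_top ?_ (ENNReal.tsum_le_tsum fun m =>
    ENNReal.ofReal_le_ofReal (jb_znorm_rpow_neg_le_prod hd (hd'.le.trans ht.le) m))
  simp_rw [ENNReal.ofReal_prod_of_nonneg fun i _ => (jb_rpow_pos _ _).le]
  rw [tsum_fin_pi_prod (fun n : ℤ => ENNReal.ofReal (jb |(n : ℝ)| ^ (-(t / d))))]
  exact ENNReal.pow_ne_top (tsum_ofReal_jb_rpow_neg_ne_top ((one_lt_div hd').2 ht))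

section NestNorm

variable {ι : Type*}

theorem nestNorm_top (F : ι → ℝ≥0∞) : nestNorm ∞ F = ⨆ i, F i := by simp [nestNorm]

theorem nestNorm_of_ne_top {p : ℝ≥0∞} (hp : p ≠ ∞) (F : ι → ℝ≥0∞) :
    nestNorm p F = (∑' i, F i ^ p.toReal) ^ (1 / p.toReal) := by
  simp [nestNorm, hp]

theorem nestNorm_mono {p : ℝ≥0∞} {F G : ι → ℝ≥0∞} (h : ∀ i, F i ≤ G i) :
    nestNorm p F ≤ nestNorm p G := by
  unfold nestNorm
  split_ifs
  · exact iSup_mono h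
  · gcongr with i; exact h i

theorem nestNorm_const_mul {p : ℝ≥0∞} (hp : p ≠ 0) (c : ℝ≥0∞) (F : ι → ℝ≥0∞) :
    nestNorm p (fun i => c * F i) = c * nestNorm p F := by
  unfold nestNorm
  split_ifs with htop
  · exact (ENNReal.mul_iSup c F).symm
  have hp' : 0 < p.toReal := ENNReal.toReal_pos hp htop
  simp_rw [ENNReal.mul_rpow_of_nonneg _ _ hp'.le, ENNReal.tsum_mul_left]
  rw [ENNReal.mul_rpow_of_nonneg _ _ (by positivity), ← ENNReal.rpow_mul,
    mul_one_div_cancel hp'.ne', ENNReal.rpow_one]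

theorem nestNorm_mul_le_iSup_mul {p : ℝ≥0∞} (hp : p ≠ 0) (A B : ι → ℝ≥0∞) :
    nestNorm p (fun i => A i * B i) ≤ (⨆ i, A i) * nestNorm p B :=
  (nestNorm_mono fun i => mul_le_mul_left (le_iSup A i) _).trans_eq (nestNorm_const_mul hp _ B)

theorem ENNReal.Lr_le_Lp_mul_Lq_tsum {p q r : ℝ} (hr : 0 < r) (hrp : r < p)
    (hpqr : 1 / r = 1 / p + 1 / q) (A B : ι → ℝ≥0∞) :
    (∑' i, (A i * B i) ^ r) ^ (1 / r) ≤
      (∑' i, A i ^ p) ^ (1 / p) * (∑' i, B i ^ q) ^ (1 / q) := by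
  let _ : MeasurableSpace ι := ⊤
  simpa [MeasureTheory.lintegral_count] using ENNReal.lintegral_Lp_mul_le_Lq_mul_Lr hr hrp hpqr
    (MeasureTheory.Measure.count : MeasureTheory.Measure ι)
    (measurable_from_top (f := A)).aemeasurable (measurable_from_top (f := B)).aemeasurable

theorem ENNReal.rpow_tsum_mul_le {p : ℝ} (hp : 1 ≤ p) (w F : ι → ℝ≥0∞) :
    (∑' i, w i * F i) ^ p ≤ (∑' i, w i) ^ (p - 1) * ∑' i, w i * F i ^ p := by
  rcases hp.eq_or_lt with rfl | hp
  · simp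
  have hp₀ : 0 < p := one_pos.trans hp
  set q := p / (p - 1)
  have hq : 1 < q := (one_lt_div (by linarith)).2 (by linarith)
  have hqp : 1 / q + 1 / p = 1 := by simp only [q]; field_simp; ring
  have hsplit : ∀ i, w i * F i = w i ^ (1 / q) * (w i ^ (1 / p) * F i) := fun i => by
    rw [← mul_assoc, ← ENNReal.rpow_add_of_nonneg _ _ (by positivity) (by positivity), hqp,
      ENNReal.rpow_one]
  have holder := ENNReal.Lr_le_Lp_mul_Lq_tsum one_pos hq (by rw [hqp, div_one])
    (fun i => w i ^ (1 / q)) (fun i => w i ^ (1 / p) * F i)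
  simp only [ENNReal.rpow_one, div_one, ← hsplit, ← ENNReal.rpow_mul,
    one_div_mul_cancel (one_pos.trans hq).ne', one_div_mul_cancel hp₀.ne',
    ENNReal.mul_rpow_of_nonneg _ _ hp₀.le] at holder
  calc (∑' i, w i * F i) ^ p
      ≤ ((∑' i, w i) ^ (1 / q) * (∑' i, w i * F i ^ p) ^ (1 / p)) ^ p := by gcongr
    _ = (∑' i, w i) ^ (p - 1) * ∑' i, w i * F i ^ p := by
      rw [ENNReal.mul_rpow_of_nonneg _ _ hp₀.le, ← ENNReal.rpow_mul, ← ENNReal.rpow_mul,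
        one_div_mul_cancel hp₀.ne', ENNReal.rpow_one]
      congr 2; simp only [q]; field_simp

theorem nestNorm_mul_le {p q r : ℝ≥0∞} (hp : p ≠ 0) (hq : q ≠ 0) (hpqr : p⁻¹ + q⁻¹ = r⁻¹)
    (A B : ι → ℝ≥0∞) :
    nestNorm r (fun i => A i * B i) ≤ nestNorm p A * nestNorm q B := by
  rcases eq_or_ne p ∞ with rfl | hp'
  · obtain rfl : q = r := by simpa using hpqr
    rw [nestNorm_top]
    exact nestNorm_mul_le_iSup_mul hq A B
  rcases eq_or_ne q ∞ with rfl | hq'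
  · obtain rfl : p = r := by simpa using hpqr
    rw [nestNorm_top, mul_comm]
    simp_rw [mul_comm (A _)]
    exact nestNorm_mul_le_iSup_mul hp B A
  have hpr : 0 < p.toReal := ENNReal.toReal_pos hp hp'
  have hqr : 0 < q.toReal := ENNReal.toReal_pos hq hq'
  have hpqr' : 1 / r.toReal = 1 / p.toReal + 1 / q.toReal := by
    have := congrArg ENNReal.toReal hpqr
    rw [ENNReal.toReal_add (by simpa using hp) (by simpa using hq)] at this
    simpa [ENNReal.toReal_inv] using this.symm
  have hrr : 0 < r.toReal := one_div_pos.1 (by rw [hpqr']; positivity)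
  have hr' : r ≠ ∞ := fun h => by simp [h] at hrr
  have hrp : r.toReal < p.toReal :=
    lt_of_one_div_lt_one_div hpr (hpqr' ▸ lt_add_of_pos_right _ (by positivity))
  rw [nestNorm_of_ne_top hr', nestNorm_of_ne_top hp', nestNorm_of_ne_top hq']
  exact ENNReal.Lr_le_Lp_mul_Lq_tsum hrr hrp hpqr' A B

end NestNorm

section Convolution

variable {G : Type*} [AddGroup G]

def discreteConv (K F : G → ℝ≥0∞) (j : G) : ℝ≥0∞ := ∑' k, K (j - k) * F k

theorem tsum_discreteConv_rpow_le {p : ℝ} (hp : 1 ≤ p) (K F : G → ℝ≥0∞) :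
    ∑' j, discreteConv K F j ^ p ≤ (∑' m, K m) ^ p * ∑' k, F k ^ p := by
  have hK : ∀ j, ∑' k, K (j - k) = ∑' m, K m := fun j => (Equiv.subLeft j).tsum_eq K
  have hK' : ∀ k, ∑' j, K (j - k) = ∑' m, K m := fun k => (Equiv.subRight k).tsum_eq K
  calc ∑' j, discreteConv K F j ^ p
      ≤ ∑' j, (∑' m, K m) ^ (p - 1) * ∑' k, K (j - k) * F k ^ p :=
        ENNReal.tsum_le_tsum fun j => by
          rw [← hK j]; exact ENNReal.rpow_tsum_mul_le hp _ _
    _ = (∑' m, K m) ^ (p - 1) * ∑' k, (∑' j, K (j - k)) * F k ^ p := by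
        rw [ENNReal.tsum_mul_left, ENNReal.tsum_comm]
        simp_rw [ENNReal.tsum_mul_right]
    _ = (∑' m, K m) ^ p * ∑' k, F k ^ p := by
        simp_rw [hK', ENNReal.tsum_mul_left, ← mul_assoc]
        congr 1
        nth_rw 2 [← ENNReal.rpow_one (∑' m, K m)]
        rw [← ENNReal.rpow_add_of_nonneg _ _ (by linarith) zero_le_one, sub_add_cancel]

theorem nestNorm_discreteConv_le {p : ℝ≥0∞} (hp : 1 ≤ p) (K F : G → ℝ≥0∞) :
    nestNorm p (discreteConv K F) ≤ (∑' m, K m) * nestNorm p F := by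
  rcases eq_or_ne p ∞ with rfl | hp'
  · simp only [nestNorm_top]
    refine iSup_le fun j => ?_
    calc discreteConv K F j ≤ ∑' k, K (j - k) * ⨆ i, F i :=
          ENNReal.tsum_le_tsum fun k => mul_le_mul' le_rfl (le_iSup F k)
      _ = (∑' m, K m) * ⨆ i, F i := by
          rw [ENNReal.tsum_mul_right]; congr 1; exact (Equiv.subLeft j).tsum_eq K
  have hp₁ : 1 ≤ p.toReal := by
    simpa using ENNReal.toReal_mono hp' hp
  have hp₀ : 0 < p.toReal := one_pos.trans_le hp₁
  rw [nestNorm_of_ne_top hp', nestNorm_of_ne_top hp']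
  calc (∑' j, discreteConv K F j ^ p.toReal) ^ (1 / p.toReal)
      ≤ ((∑' m, K m) ^ p.toReal * ∑' k, F k ^ p.toReal) ^ (1 / p.toReal) := by
        gcongr; exact tsum_discreteConv_rpow_le hp₁ K F
    _ = (∑' m, K m) * (∑' k, F k ^ p.toReal) ^ (1 / p.toReal) := by
        rw [ENNReal.mul_rpow_of_nonneg _ _ (by positivity), ← ENNReal.rpow_mul,
          mul_one_div_cancel hp₀.ne', ENNReal.rpow_one]

end Convolution

theorem ofReal_mul_norm_Tbil_le {d : ℕ} {Θ : Zd d → Zd d → Zd d → ℂ} {j : Zd d} {w C : ℝ}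
    {K v₁ v₂ : Zd d → ℝ} (hw : 0 ≤ w) (hC : 0 ≤ C) (hK : ∀ m, 0 ≤ K m) (hv₁ : ∀ k, 0 ≤ v₁ k)
    (hΘ : ∀ k l, w * ‖Θ j k l‖ ≤ C * ((K (j - k) * v₁ k) * (K (j - l) * v₂ l)))
    (f g : Zd d → ℂ) :
    ENNReal.ofReal (w * ‖Tbil Θ f g j‖) ≤ ENNReal.ofReal C *
      (discreteConv (fun m => ENNReal.ofReal (K m)) (fun k => ENNReal.ofReal (v₁ k * ‖f k‖)) j *
        discreteConv (fun m => ENNReal.ofReal (K m))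
          (fun l => ENNReal.ofReal (v₂ l * ‖g l‖)) j) := by
  have hT : ‖Tbil Θ f g j‖ₑ ≤ ∑' k, ∑' l, ‖Θ j k l * f k * g l‖ₑ :=
    enorm_tsum_le_tsum_enorm.trans (ENNReal.tsum_le_tsum fun k => enorm_tsum_le_tsum_enorm)
  calc ENNReal.ofReal (w * ‖Tbil Θ f g j‖)
      ≤ ∑' k, ∑' l, ENNReal.ofReal (w * (‖Θ j k l‖ * ‖f k‖ * ‖g l‖)) := by
        rw [ENNReal.ofReal_mul hw, ofReal_norm]
        refine (mul_le_mul' le_rfl hT).trans_eq ?_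
        simp only [← ENNReal.tsum_mul_left, ← ofReal_norm, norm_mul, ← ENNReal.ofReal_mul hw]
    _ ≤ ∑' k, ∑' l, ENNReal.ofReal C *
          ((ENNReal.ofReal (K (j - k)) * ENNReal.ofReal (v₁ k * ‖f k‖)) *
            (ENNReal.ofReal (K (j - l)) * ENNReal.ofReal (v₂ l * ‖g l‖))) := by
        refine ENNReal.tsum_le_tsum fun k => ENNReal.tsum_le_tsum fun l => ?_
        rw [← ENNReal.ofReal_mul (hK _), ← ENNReal.ofReal_mul (hK _),
          ← ENNReal.ofReal_mul (mul_nonneg (hK _) (mul_nonneg (hv₁ k) (norm_nonneg _))),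
          ← ENNReal.ofReal_mul hC]
        refine ENNReal.ofReal_le_ofReal ?_
        calc w * (‖Θ j k l‖ * ‖f k‖ * ‖g l‖) = (w * ‖Θ j k l‖) * (‖f k‖ * ‖g l‖) := by ring
          _ ≤ (C * ((K (j - k) * v₁ k) * (K (j - l) * v₂ l))) * (‖f k‖ * ‖g l‖) :=
            mul_le_mul_of_nonneg_right (hΘ k l) (by positivity)
          _ = _ := by ring
    _ = _ := by
        simp only [ENNReal.tsum_mul_left, ENNReal.tsum_mul_right, discreteConv]

theorem norm_le_of_tensorNorm_ne_top {d : ℕ} {N : ℝ} {Θ : Zd d → Zd d → Zd d → ℂ}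
    (hΘ : tensorNorm 0 N Θ ≠ ∞) (j k l : Zd d) :
    ‖Θ j k l‖ ≤ (tensorNorm 0 N Θ).toReal * jb (znorm (j - k) + znorm (j - l)) ^ (-(2 * N)) := by
  have hle : ENNReal.ofReal (‖Θ j k l‖ * jb (znorm (j - k) + znorm (j - l)) ^ (2 * N))
      ≤ tensorNorm 0 N Θ := by
    unfold tensorNorm
    refine le_trans ?_ (le_iSup _ j)
    refine le_trans ?_ (le_iSup _ k)
    refine le_trans (by simp) (le_iSup _ l)
  rw [ENNReal.ofReal_le_iff_le_toReal hΘ] at hle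
  rwa [rpow_neg (jb_pos _).le, ← div_eq_mul_inv, le_div_iff₀ (jb_rpow_pos _ _)]

theorem jb_rpow_mul_norm_le {d : ℕ} {s₁ s₂ N u M : ℝ} {Θ : Zd d → Zd d → Zd d → ℂ} {j k l : Zd d}
    (hu : 0 ≤ u) (hN : 2 * N = (u + |s₁|) + (u + |s₂|))
    (hΘ : ‖Θ j k l‖ ≤ M * jb (znorm (j - k) + znorm (j - l)) ^ (-(2 * N))) :
    jb (znorm j) ^ (s₁ + s₂) * ‖Θ j k l‖ ≤ √2 ^ |s₁| * √2 ^ |s₂| * M *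
      ((jb (znorm (j - k)) ^ (-u) * jb (znorm k) ^ s₁) *
        (jb (znorm (j - l)) ^ (-u) * jb (znorm l) ^ s₂)) := by
  have hM : 0 ≤ M := by
    have := (norm_nonneg _).trans hΘ
    exact nonneg_of_mul_nonneg_left this (jb_rpow_pos _ _)
  have hk := jb_rpow_mul_jb_rpow_neg_le (znorm_nonneg j) (znorm_nonneg k)
    (abs_znorm_sub_znorm_le j k) s₁ u
  have hl := jb_rpow_mul_jb_rpow_neg_le (znorm_nonneg j) (znorm_nonneg l)
    (abs_znorm_sub_znorm_le j l) s₂ u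
  have hdecay : ‖Θ j k l‖ ≤
      M * (jb (znorm (j - k)) ^ (-(u + |s₁|)) * jb (znorm (j - l)) ^ (-(u + |s₂|))) := by
    refine hΘ.trans (mul_le_mul_of_nonneg_left ?_ hM)
    rw [hN]
    exact jb_add_rpow_neg_le (znorm_nonneg _) (znorm_nonneg _) (by positivity) (by positivity)
  have hj := jb_pos (znorm j)
  calc jb (znorm j) ^ (s₁ + s₂) * ‖Θ j k l‖
      ≤ jb (znorm j) ^ (s₁ + s₂) *
          (M * (jb (znorm (j - k)) ^ (-(u + |s₁|)) * jb (znorm (j - l)) ^ (-(u + |s₂|)))) := by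
        gcongr
    _ = M * ((jb (znorm j) ^ s₁ * jb (znorm (j - k)) ^ (-(u + |s₁|))) *
          (jb (znorm j) ^ s₂ * jb (znorm (j - l)) ^ (-(u + |s₂|)))) := by
        rw [rpow_add hj]; ring
    _ ≤ M * ((√2 ^ |s₁| * (jb (znorm (j - k)) ^ (-u) * jb (znorm k) ^ s₁)) *
          (√2 ^ |s₂| * (jb (znorm (j - l)) ^ (-u) * jb (znorm l) ^ s₂))) := by
        refine mul_le_mul_of_nonneg_left (mul_le_mul hk hl ?_ ?_) hM
        · exact mul_nonneg (jb_rpow_pos _ _).le (jb_rpow_pos _ _).le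
        · exact mul_nonneg (by positivity) (mul_nonneg (jb_rpow_pos _ _).le (jb_rpow_pos _ _).le)
    _ = _ := by ring

theorem wlpNorm_zero {d : ℕ} (p : ℝ≥0∞) (f : Zd d → ℂ) : wlpNorm p 0 f = lpNorm p f := by
  simp [wlpNorm, lpNorm]

theorem wlpNorm_Tbil_le {d : ℕ} {s₁ s₂ N : ℝ} {Θ : Zd d → Zd d → Zd d → ℂ}
    (hΘ : tensorNorm 0 N Θ ≠ ∞) (hN : N > (d : ℝ) + (|s₁| + |s₂|) / 2) {p q r : ℝ≥0∞}
    (hp : 1 ≤ p) (hq : 1 ≤ q) (hpqr : p⁻¹ + q⁻¹ = r⁻¹) :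
    ∃ C : ℝ, 0 < C ∧ ∀ f g : Zd d → ℂ,
      wlpNorm r (s₁ + s₂) (Tbil Θ f g) ≤ ENNReal.ofReal C * wlpNorm p s₁ f * wlpNorm q s₂ g := by
  have hp₀ : p ≠ 0 := (one_pos.trans_le hp).ne'
  have hq₀ : q ≠ 0 := (one_pos.trans_le hq).ne'
  have hr₀ : r ≠ 0 := by
    rintro rfl
    simp [ENNReal.add_eq_top, hp₀, hq₀] at hpqr
  set u := N - (|s₁| + |s₂|) / 2 with hu_def
  have hu : (d : ℝ) < u := by rw [hu_def]; linarith
  set c := √2 ^ |s₁| * √2 ^ |s₂| * (tensorNorm 0 N Θ).toReal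
  have hc : 0 ≤ c := by positivity
  set K : Zd d → ℝ≥0∞ := fun m => ENNReal.ofReal (jb (znorm m) ^ (-u))
  set S := ∑' m, K m
  have hS : S ≠ ∞ := tsum_ofReal_jb_znorm_rpow_neg_ne_top hu
  refine ⟨c * S.toReal * S.toReal + 1, by positivity, fun f g => ?_⟩
  have hpointwise : ∀ j, ENNReal.ofReal (jb (znorm j) ^ (s₁ + s₂) * ‖Tbil Θ f g j‖) ≤
      ENNReal.ofReal c *
        (discreteConv K (fun k => ENNReal.ofReal (jb (znorm k) ^ s₁ * ‖f k‖)) j *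
          discreteConv K (fun l => ENNReal.ofReal (jb (znorm l) ^ s₂ * ‖g l‖)) j) := fun j =>
    ofReal_mul_norm_Tbil_le (jb_rpow_pos _ _).le hc (fun _ => (jb_rpow_pos _ _).le)
      (fun _ => (jb_rpow_pos _ _).le)
      (fun k l => jb_rpow_mul_norm_le ((Nat.cast_nonneg d).trans hu.le) (by rw [hu_def]; ring)
        (norm_le_of_tensorNorm_ne_top hΘ j k l)) f g
  calc wlpNorm r (s₁ + s₂) (Tbil Θ f g)
      ≤ nestNorm r fun j => ENNReal.ofReal c *
          (discreteConv K (fun k => ENNReal.ofReal (jb (znorm k) ^ s₁ * ‖f k‖)) j *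
            discreteConv K (fun l => ENNReal.ofReal (jb (znorm l) ^ s₂ * ‖g l‖)) j) :=
        nestNorm_mono hpointwise
    _ ≤ ENNReal.ofReal c * ((S * wlpNorm p s₁ f) * (S * wlpNorm q s₂ g)) := by
        rw [nestNorm_const_mul hr₀]
        gcongr
        refine (nestNorm_mul_le hp₀ hq₀ hpqr _ _).trans ?_
        gcongr <;> exact nestNorm_discreteConv_le (by assumption) _ _
    _ = ENNReal.ofReal (c * S.toReal * S.toReal) * wlpNorm p s₁ f * wlpNorm q s₂ g := by
        rw [ENNReal.ofReal_mul (mul_nonneg hc ENNReal.toReal_nonneg), ENNReal.ofReal_mul hc,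
          ENNReal.ofReal_toReal hS]
        ring
    _ ≤ _ := by gcongr; linarith

theorem stmt_3_general {d : ℕ} (s₁ s₂ N : ℝ)
    (Θ : Zd d → Zd d → Zd d → ℂ)
    (hΘ : tensorNorm 0 N Θ ≠ ∞)
    (hN : N > (d : ℝ) + (|s₁| + |s₂|) / 2)
    (p q r : ℝ≥0∞) (hp : 1 ≤ p) (hq : 1 ≤ q)
    (hpqr : p⁻¹ + q⁻¹ = r⁻¹) :
    (∃ C : ℝ, 0 < C ∧ ∀ f g : Zd d → ℂ,
        wlpNorm r (s₁ + s₂) (Tbil Θ f g) ≤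
          ENNReal.ofReal C * wlpNorm p s₁ f * wlpNorm q s₂ g) ∧
    ((d : ℝ) < N → ∃ C : ℝ, 0 < C ∧ ∀ f g : Zd d → ℂ,
        lpNorm r (Tbil Θ f g) ≤ ENNReal.ofReal C * lpNorm p f * lpNorm q g) := by
  refine ⟨wlpNorm_Tbil_le hΘ hN hp hq hpqr, fun hdN => ?_⟩
  obtain ⟨C, hC, hbound⟩ :=
    wlpNorm_Tbil_le (s₁ := 0) (s₂ := 0) hΘ (by simpa using hdN) hp hq hpqr
  refine ⟨C, hC, fun f g => ?_⟩
  simpa [wlpNorm_zero] using hbound f g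

/-- Corollary 2: if `‖Θ‖_{0,N} < ∞` for some `N > d + (|s₁|+|s₂|)/2`, then
`𝒯_Θ : ℓ^p_{s₁} × ℓ^q_{s₂} → ℓ^r_{s₁+s₂}` is bounded; in particular (the case where
`N > d`, applied with `s₁ = s₂ = 0`), `𝒯_Θ : ℓ^p × ℓ^q → ℓ^r` is bounded. -/
theorem stmt_3 {d : ℕ} (hd : 1 ≤ d) (s₁ s₂ N : ℝ)
    (Θ : Zd d → Zd d → Zd d → ℂ)
    (hΘ : tensorNorm 0 N Θ ≠ ∞)
    (hN : N > (d : ℝ) + (|s₁| + |s₂|) / 2)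
    (p q r : ℝ≥0∞) (hp : 1 ≤ p) (hq : 1 ≤ q) (hr : 1 ≤ r)
    (hpqr : p⁻¹ + q⁻¹ = r⁻¹) :
    (∃ C : ℝ, 0 < C ∧ ∀ f g : Zd d → ℂ,
        wlpNorm r (s₁ + s₂) (Tbil Θ f g) ≤
          ENNReal.ofReal C * wlpNorm p s₁ f * wlpNorm q s₂ g) ∧
    ((d : ℝ) < N → ∃ C : ℝ, 0 < C ∧ ∀ f g : Zd d → ℂ,
        lpNorm r (Tbil Θ f g) ≤ ENNReal.ofReal C * lpNorm p f * lpNorm q g) :=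
  stmt_3_general s₁ s₂ N Θ hΘ hN p q r hp hq hpqr
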